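/- arXiv:2602.12023 — 3 statements merged into one kernel-verified Lean document; each statement's English description precedes it below -/
import Mathlib

section
/- Let W=(W_1,…,W_n) be i.i.d. Bernoulli(π), π∈(0,1), and for each i let ỹ_i:{0,1}^n→ℝ be any function. Define τ(π) = (1/(nπ(1−π)))·E[ (∑_{j=1}^n ỹ_j(W)) · (∑_{i=1}^n (W_i−π)) ], τ_ADE(π) = (1/n)∑_{i=1}^n E[ ỹ_i(W_i=1, W_{−i}) − ỹ_i(W_i=0, W_{−i}) ], and τ_AIE(π) = (1/n)∑_{j=1}^n ∑_{i≠j} E[ ỹ_j(W_i=1, W_{−i}) − ỹ_j(W_i=0, W_{−i}) ]. Then τ(π) = τ_ADE(π) + τ_AIE(π). -/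
open Finset

/-- The value of a Bernoulli variable: `1` if true, `0` if false. -/
def ind (b : Bool) : ℝ := if b then 1 else 0

/-- Product Bernoulli(π) pmf on `{0,1}^n`. -/
noncomputable def pw (n : ℕ) (π : ℝ) (w : Fin n → Bool) : ℝ :=
  ∏ i, if w i then π else 1 - π

/-- Expectation under `W ~ Bern(π)^n`. -/
noncomputable def Exp (n : ℕ) (π : ℝ) (f : (Fin n → Bool) → ℝ) : ℝ :=
  ∑ w : Fin n → Bool, pw n π w * f w

lemma update_symm {n : ℕ} (i : Fin n) (b b' : Bool) (v : {j : Fin n // j ≠ i} → Bool) :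
    Function.update ((Equiv.funSplitAt i Bool).symm (b, v)) i b'
      = (Equiv.funSplitAt i Bool).symm (b', v) := by
  funext j
  by_cases h : j = i
  · subst h; simp [Equiv.funSplitAt]
  · simp [Function.update, h, Equiv.funSplitAt]

lemma pw_symm {n : ℕ} (π : ℝ) (i : Fin n) (b : Bool) (v : {j : Fin n // j ≠ i} → Bool) :
    pw n π ((Equiv.funSplitAt i Bool).symm (b, v))
      = (if b then π else 1 - π) * ∏ j : {j : Fin n // j ≠ i}, (if v j then π else 1 - π) := by
  unfold pw
  rw [← Finset.mul_prod_erase univ _ (mem_univ i)]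
  congr 1
  · simp [Equiv.funSplitAt]
  · rw [Finset.prod_subtype (univ.erase i) (p := fun j => j ≠ i) (by simp)]
    refine Finset.prod_congr rfl fun j _ => ?_
    simp [Equiv.funSplitAt, j.2]

lemma symm_apply_same {n : ℕ} (i : Fin n) (b : Bool) (v : {j : Fin n // j ≠ i} → Bool) :
    (Equiv.funSplitAt i Bool).symm (b, v) i = b := by
  simp [Equiv.funSplitAt]

lemma key (n : ℕ) (π : ℝ) (i : Fin n) (f : (Fin n → Bool) → ℝ) :
    Exp n π (fun w => f w * (ind (w i) - π)) =
      π * (1 - π) * Exp n π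
        (fun w => f (Function.update w i true) - f (Function.update w i false)) := by
  unfold Exp
  rw [mul_sum]
  rw [← ((Equiv.funSplitAt i Bool).symm.sum_comp
    (fun w => pw n π w * (f w * (ind (w i) - π))))]
  rw [← ((Equiv.funSplitAt i Bool).symm.sum_comp
    (fun w => π * (1 - π) * (pw n π w * (f (Function.update w i true) - f (Function.update w i false)))))]
  rw [Fintype.sum_prod_type, Fintype.sum_prod_type]
  rw [Finset.sum_comm]
  conv_rhs => rw [Finset.sum_comm]
  refine Finset.sum_congr rfl fun v _ => ?_
  rw [Fintype.sum_bool, Fintype.sum_bool]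
  simp only [pw_symm, update_symm, symm_apply_same, ind, Bool.false_eq_true, if_true, if_false]
  ring

lemma Exp_sum {n : ℕ} (π : ℝ) {α : Type*} (s : Finset α) (g : α → (Fin n → Bool) → ℝ) :
    Exp n π (fun w => ∑ j ∈ s, g j w) = ∑ j ∈ s, Exp n π (g j) := by
  unfold Exp
  simp only [Finset.mul_sum]
  exact Finset.sum_comm

/-- Hu–Li–Wager decomposition: the marginal policy effect equals the sum of the
average direct effect and the average indirect effect. -/
theorem stmt4 (n : ℕ) (hn : 1 ≤ n) (π : ℝ) (hπ : 0 < π) (hπ' : π < 1)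
    (ytil : Fin n → (Fin n → Bool) → ℝ) :
    (1 / (n * π * (1 - π))) *
        Exp n π (fun w => (∑ j, ytil j w) * (∑ i, (ind (w i) - π))) =
      (1 / n) * ∑ i, Exp n π
          (fun w => ytil i (Function.update w i true) - ytil i (Function.update w i false)) +
      (1 / n) * ∑ j, ∑ i ∈ univ.erase j, Exp n π
          (fun w => ytil j (Function.update w i true) - ytil j (Function.update w i false)) := by
  have hn' : (n : ℝ) ≠ 0 := Nat.cast_ne_zero.2 (by omega)
  set E : Fin n → Fin n → ℝ := fun i j => Exp n π
    (fun w => ytil j (Function.update w i true) - ytil j (Function.update w i false)) with hE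
  have h1 : Exp n π (fun w => (∑ j, ytil j w) * (∑ i, (ind (w i) - π)))
      = π * (1 - π) * ∑ i, ∑ j, E i j := by
    have e1 : (fun w => (∑ j, ytil j w) * (∑ i, (ind (w i) - π)))
        = fun w => ∑ i, (fun i w => (∑ j, ytil j w) * (ind (w i) - π)) i w := by
      funext w; rw [Finset.mul_sum]
    rw [e1, Exp_sum, Finset.mul_sum]
    refine Finset.sum_congr rfl fun i _ => ?_
    rw [key]
    congr 1
    have e2 : (fun w => (∑ j, ytil j (Function.update w i true))
          - ∑ j, ytil j (Function.update w i false))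
        = fun w => ∑ j, (fun j w => ytil j (Function.update w i true)
          - ytil j (Function.update w i false)) j w := by
      funext w; rw [Finset.sum_sub_distrib]
    rw [e2, Exp_sum]
  have h2 : ∑ i, ∑ j, E i j = (∑ i, E i i) + ∑ j, ∑ i ∈ univ.erase j, E i j := by
    rw [Finset.sum_comm, ← Finset.sum_add_distrib]
    exact Finset.sum_congr rfl fun j _ => (Finset.add_sum_erase _ _ (mem_univ j)).symm
  have h3 : (∑ i, Exp n π (fun w => ytil i (Function.update w i true)
      - ytil i (Function.update w i false))) = ∑ i, E i i := rfl
  have h4 : (∑ j, ∑ i ∈ univ.erase j, Exp n π (fun w => ytil j (Function.update w i true)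
      - ytil j (Function.update w i false))) = ∑ j, ∑ i ∈ univ.erase j, E i j := rfl
  rw [h1, h3, h4, ← mul_add, ← h2]
  have hπ0 : π ≠ 0 := ne_of_gt hπ
  have hπ1 : (1 - π) ≠ 0 := by linarith
  field_simp
end

section
/- Let W=(W_1,…,W_n) be i.i.d. Bernoulli(π), π∈(0,1), and f_i, y_i:{0,1}^n→ℝ for each i. Define τ_ADE(f) = (1/n)∑_{i=1}^n E[f_i(W_i=1,W_{−i}) − f_i(W_i=0,W_{−i})] and similarly τ_ADE(y). Then |τ_ADE(f) − τ_ADE(y)| ≤ (nπ(1−π))^{−1/2} · ( ∑_{i=1}^n E[(f_i(W)−y_i(W))^2] )^{1/2}. -/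
open Finset

/-- Average direct effect functional of a family of outcome models. -/
noncomputable def tauADE (n : ℕ) (π : ℝ) (f : Fin n → (Fin n → Bool) → ℝ) : ℝ :=
  (1 / n) * ∑ i, Exp n π
    (fun w => f i (Function.update w i true) - f i (Function.update w i false))

/-!
`τ_ADE` is linear, so it suffices to bound `τ_ADE(g)` for `g = f - y`. Conditioning on `W_i`
turns each finite difference into an inverse-probability-weighted expectation,
`E[g_i(W_i=1, W_{-i}) - g_i(W_i=0, W_{-i})] = E[g_i(W) h(W_i)]` with `h(1) = 1/π`,
`h(0) = -1/(1-π)`, and `E[h(W_i)^2] = 1/(π(1-π))`. Cauchy–Schwarz, first under the Bernoulli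
measure and then over `i`, gives `(∑_i E[g_i h(W_i)])^2 ≤ n/(π(1-π)) ∑_i E[g_i^2]`.
-/

noncomputable def ipWeight (π : ℝ) (b : Bool) : ℝ :=
  if b then π⁻¹ else -(1 - π)⁻¹

section

variable {n : ℕ} {π : ℝ}

lemma pw_nonneg (h0 : 0 ≤ π) (h1 : π ≤ 1) (w : Fin n → Bool) : 0 ≤ pw n π w :=
  prod_nonneg fun j _ => by split <;> linarith

lemma sum_pw : ∑ w, pw n π w = 1 :=
  calc ∑ w, pw n π w = ∏ _i : Fin n, ∑ b : Bool, if b then π else 1 - π :=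
        (Fintype.prod_sum fun _ (b : Bool) => if b then π else 1 - π).symm
    _ = 1 := by simp

lemma Exp_const (c : ℝ) : Exp n π (fun _ => c) = c := by
  rw [Exp, ← sum_mul, sum_pw, one_mul]

lemma Exp_sub (F G : (Fin n → Bool) → ℝ) :
    Exp n π (fun w => F w - G w) = Exp n π F - Exp n π G := by
  simp only [Exp, mul_sub, sum_sub_distrib]

lemma Exp_mul_const (F : (Fin n → Bool) → ℝ) (c : ℝ) :
    Exp n π (fun w => F w * c) = Exp n π F * c := by
  simp only [Exp, ← mul_assoc, sum_mul]

lemma pw_funSplitAt_symm (i : Fin n) (b : Bool) (v : {j // j ≠ i} → Bool) :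
    pw n π ((Equiv.funSplitAt i Bool).symm (b, v)) =
      (if b then π else 1 - π) * ∏ j, if v j then π else 1 - π := by
  rw [pw, Fintype.prod_eq_mul_prod_subtype_ne _ i]
  congr 1
  · simp [Equiv.funSplitAt_symm_apply]
  · exact prod_congr rfl fun j _ => by simp [Equiv.funSplitAt_symm_apply, j.2]

lemma Exp_eq_sum_funSplitAt (i : Fin n) (F : (Fin n → Bool) → ℝ) :
    Exp n π F = ∑ v : {j // j ≠ i} → Bool, (∏ j, if v j then π else 1 - π) *
      (π * F ((Equiv.funSplitAt i Bool).symm (true, v)) +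
        (1 - π) * F ((Equiv.funSplitAt i Bool).symm (false, v))) := by
  rw [Exp, ← (Equiv.funSplitAt i Bool).symm.sum_comp, Fintype.sum_prod_type, Fintype.sum_bool,
    ← sum_add_distrib]
  refine sum_congr rfl fun v _ => ?_
  simp only [pw_funSplitAt_symm, if_true, Bool.false_eq_true, if_false]
  ring

lemma Exp_eq_add_update (i : Fin n) (F : (Fin n → Bool) → ℝ) :
    Exp n π F = π * Exp n π (fun w => F (Function.update w i true)) +
      (1 - π) * Exp n π (fun w => F (Function.update w i false)) := by
  have update_symm : ∀ b c v, Function.update ((Equiv.funSplitAt i Bool).symm (b, v)) i c =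
      (Equiv.funSplitAt i Bool).symm (c, v) := by
    intro b c v
    ext j
    by_cases h : j = i <;> simp [Equiv.funSplitAt_symm_apply, Function.update, h]
  simp only [Exp_eq_sum_funSplitAt i, update_symm, mul_sum, ← sum_add_distrib]
  exact sum_congr rfl fun v _ => by ring

lemma sq_Exp_mul_le (h0 : 0 ≤ π) (h1 : π ≤ 1) (F G : (Fin n → Bool) → ℝ) :
    Exp n π (fun w => F w * G w) ^ 2 ≤
      Exp n π (fun w => F w ^ 2) * Exp n π (fun w => G w ^ 2) :=
  sum_sq_le_sum_mul_sum_of_sq_le_mul _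
    (fun w _ => mul_nonneg (pw_nonneg h0 h1 w) (sq_nonneg _))
    (fun w _ => mul_nonneg (pw_nonneg h0 h1 w) (sq_nonneg _))
    (fun w _ => le_of_eq (by ring))

lemma Exp_update_sub_eq_Exp_mul_ipWeight (h0 : π ≠ 0) (h1 : π ≠ 1) (i : Fin n)
    (g : (Fin n → Bool) → ℝ) :
    Exp n π (fun w => g (Function.update w i true) - g (Function.update w i false)) =
      Exp n π (fun w => g w * ipWeight π (w i)) := by
  have h1' : 1 - π ≠ 0 := sub_ne_zero.mpr h1.symm
  rw [Exp_eq_add_update i (fun w => g w * ipWeight π (w i))]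
  simp only [Function.update_self, ipWeight, if_true, Bool.false_eq_true, if_false,
    Exp_mul_const, Exp_sub]
  field_simp
  ring

lemma Exp_ipWeight_sq (h0 : π ≠ 0) (h1 : π ≠ 1) (i : Fin n) :
    Exp n π (fun w => ipWeight π (w i) ^ 2) = (π * (1 - π))⁻¹ := by
  have h1' : 1 - π ≠ 0 := sub_ne_zero.mpr h1.symm
  rw [Exp_eq_add_update i]
  simp only [Function.update_self, ipWeight, if_true, Bool.false_eq_true, if_false, Exp_const]
  field_simp
  ring

lemma tauADE_sub (f y : Fin n → (Fin n → Bool) → ℝ) :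
    tauADE n π f - tauADE n π y = tauADE n π (f - y) := by
  simp only [tauADE, ← mul_sub, ← sum_sub_distrib, ← Exp_sub, Pi.sub_apply]
  congr 1
  exact sum_congr rfl fun i _ => congrArg _ (funext fun w => by ring)

lemma tauADE_eq_sum_Exp_mul_ipWeight (h0 : π ≠ 0) (h1 : π ≠ 1)
    (g : Fin n → (Fin n → Bool) → ℝ) :
    tauADE n π g = (1 / n) * ∑ i, Exp n π (fun w => g i w * ipWeight π (w i)) := by
  simp only [tauADE, Exp_update_sub_eq_Exp_mul_ipWeight h0 h1]

lemma sq_tauADE_le (h0 : 0 < π) (h1 : π < 1) (g : Fin n → (Fin n → Bool) → ℝ) :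
    tauADE n π g ^ 2 ≤ (∑ i, Exp n π (fun w => g i w ^ 2)) / (n * π * (1 - π)) := by
  rcases Nat.eq_zero_or_pos n with rfl | hn
  · simp [tauADE]
  have h1' : 0 < 1 - π := sub_pos.mpr h1
  have cauchy_schwarz : (∑ i, Exp n π (fun w => g i w * ipWeight π (w i))) ^ 2 ≤
      (∑ i, Exp n π (fun w => g i w ^ 2)) * ∑ _i : Fin n, (π * (1 - π))⁻¹ :=
    sum_sq_le_sum_mul_sum_of_sq_le_mul _
      (fun i _ => sum_nonneg fun w _ => mul_nonneg (pw_nonneg h0.le h1.le w) (sq_nonneg _))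
      (fun _ _ => by positivity)
      (fun i _ => Exp_ipWeight_sq h0.ne' h1.ne i ▸ sq_Exp_mul_le h0.le h1.le _ _)
  rw [tauADE_eq_sum_Exp_mul_ipWeight h0.ne' h1.ne, mul_pow]
  rw [sum_const, card_univ, Fintype.card_fin, nsmul_eq_mul] at cauchy_schwarz
  calc (1 / (n : ℝ)) ^ 2 * (∑ i, Exp n π (fun w => g i w * ipWeight π (w i))) ^ 2
      ≤ (1 / (n : ℝ)) ^ 2 * ((∑ i, Exp n π (fun w => g i w ^ 2)) * (n * (π * (1 - π))⁻¹)) :=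
        mul_le_mul_of_nonneg_left cauchy_schwarz (by positivity)
    _ = _ := by field_simp

end

theorem stmt5_general (n : ℕ) (π : ℝ) (hπ : 0 < π) (hπ' : π < 1)
    (f y : Fin n → (Fin n → Bool) → ℝ) :
    |tauADE n π f - tauADE n π y| ≤
      (1 / Real.sqrt (n * π * (1 - π))) *
        Real.sqrt (∑ i, Exp n π (fun w => (f i w - y i w) ^ 2)) := by
  have hc : 0 ≤ (n : ℝ) * π * (1 - π) := by
    have := sub_pos.mpr hπ'
    positivity
  rw [one_div_mul_eq_div, ← Real.sqrt_div' _ hc, tauADE_sub]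
  exact Real.abs_le_sqrt (sq_tauADE_le hπ hπ' (f - y))

/-- Lipschitz bound for the ADE functional:
`|τ_ADE(f) - τ_ADE(y)| ≤ (nπ(1-π))^{-1/2} (∑_i E[(f_i - y_i)^2])^{1/2}`. -/
theorem stmt5 (n : ℕ) (hn : 1 ≤ n) (π : ℝ) (hπ : 0 < π) (hπ' : π < 1)
    (f y : Fin n → (Fin n → Bool) → ℝ) :
    |tauADE n π f - tauADE n π y| ≤
      (1 / Real.sqrt (n * π * (1 - π))) *
        Real.sqrt (∑ i, Exp n π (fun w => (f i w - y i w) ^ 2)) :=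
  stmt5_general n π hπ hπ' f y
end

section
/- Let W_1,…,W_n be i.i.d. Bernoulli(π), π∈(0,1), and define y_i(w)=∑_{j=1}^n (w_j−π) and f_i(w)=2·y_i(w) for all i. Then for the marginal policy effect functional τ_MPE(f)=(1/(nπ(1−π)))E[(∑_j f_j(W))(∑_i(W_i−π))], one has τ_MPE(y)=n, τ_MPE(f)=2n, and ∑_{i=1}^n E[(f_i(W)−y_i(W))^2] = n^2·π(1−π), so that |τ_MPE(f)−τ_MPE(y)|^2 = n^2 = (π(1−π))^{−1}·∑_i E[(f_i−y_i)^2]; hence the Lipschitz constant (π(1−π))^{−1/2} in the bound |τ_MPE(f)−τ_MPE(y)| ≤ (π(1−π))^{−1/2}(∑_i E[(f_i−y_i)^2])^{1/2} cannot be improved in its dependence on n. -/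
open Finset

/-- Marginal policy effect functional of a family of outcome models. -/
noncomputable def tauMPE (n : ℕ) (π : ℝ) (f : Fin n → (Fin n → Bool) → ℝ) : ℝ :=
  (1 / (n * π * (1 - π))) *
    Exp n π (fun w => (∑ j, f j w) * (∑ i, (ind (w i) - π)))

lemma sum_pi_succ {n : ℕ} (g : (Fin (n+1) → Bool) → ℝ) :
    ∑ w : Fin (n+1) → Bool, g w = ∑ b : Bool, ∑ w : Fin n → Bool, g (Fin.cons b w) := by
  rw [← Fintype.sum_prod_type']
  exact (Fintype.sum_equiv (Fin.consEquiv fun _ => Bool) _ _ (fun p => rfl)).symm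

lemma pw_cons {n : ℕ} (π : ℝ) (b : Bool) (w : Fin n → Bool) :
    pw (n+1) π (Fin.cons b w) = (if b then π else 1 - π) * pw n π w := by
  simp [pw, Fin.prod_univ_succ]

lemma Exp_succ {n : ℕ} (π : ℝ) (g : (Fin (n+1) → Bool) → ℝ) :
    Exp (n+1) π g = ∑ b : Bool, (if b then π else 1 - π) * Exp n π (fun w => g (Fin.cons b w)) := by
  simp only [Exp, sum_pi_succ (fun w => pw (n+1) π w * g w), pw_cons, Finset.mul_sum, mul_assoc]

noncomputable def SS (n : ℕ) (π : ℝ) (w : Fin n → Bool) : ℝ := ∑ j, (ind (w j) - π)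

lemma SS_cons {n : ℕ} (π : ℝ) (b : Bool) (w : Fin n → Bool) :
    SS (n+1) π (Fin.cons b w) = (ind b - π) + SS n π w := by
  simp [SS, Fin.sum_univ_succ]
  ring

lemma Exp_linear {n : ℕ} (π : ℝ) (f g : (Fin n → Bool) → ℝ) (a c : ℝ) :
    Exp n π (fun w => a * f w + c * g w) = a * Exp n π f + c * Exp n π g := by
  simp only [Exp, Finset.mul_sum, ← Finset.sum_add_distrib]
  exact Finset.sum_congr rfl fun w _ => by ring

lemma Exp_one (n : ℕ) (π : ℝ) : Exp n π (fun _ => 1) = 1 := by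
  induction n with
  | zero => simp [Exp, pw]
  | succ n ih => rw [Exp_succ]; simp [ih]

lemma Exp_S (n : ℕ) (π : ℝ) : Exp n π (SS n π) = 0 := by
  induction n with
  | zero => simp [Exp, SS, pw]
  | succ n ih =>
    rw [Exp_succ]
    have h : ∀ b : Bool, Exp n π (fun w => SS (n+1) π (Fin.cons b w)) = (ind b - π) := by
      intro b
      have : (fun w => SS (n+1) π (Fin.cons b w))
          = fun w => (ind b - π) * (fun _ => (1:ℝ)) w + 1 * SS n π w := by
        funext w; rw [SS_cons]; ring
      rw [this, Exp_linear, Exp_one, ih]; ring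
    simp [h, ind]; ring

lemma Exp_S2 (n : ℕ) (π : ℝ) : Exp n π (fun w => (SS n π w)^2) = n * π * (1 - π) := by
  induction n with
  | zero => simp [Exp, SS, pw]
  | succ n ih =>
    rw [Exp_succ]
    have h : ∀ b : Bool, Exp n π (fun w => (SS (n+1) π (Fin.cons b w))^2)
        = (ind b - π)^2 + n * π * (1 - π) := by
      intro b
      have e1 : Exp n π (fun w => 2*(ind b - π) * SS n π w + 1 * (SS n π w)^2)
          = 2*(ind b - π) * Exp n π (SS n π) + 1 * Exp n π (fun w => (SS n π w)^2) :=
        Exp_linear π (SS n π) _ _ _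
      have e2 : (fun w => (SS (n+1) π (Fin.cons b w))^2)
          = fun w => (ind b - π)^2 * (fun _ => (1:ℝ)) w
              + 1 * (2*(ind b - π) * SS n π w + 1 * (SS n π w)^2) := by
        funext w; rw [SS_cons]; ring
      rw [e2, Exp_linear, Exp_one, e1, Exp_S, ih]; ring
    simp only [h]
    simp [ind]
    ring

lemma Exp_const_mul {n : ℕ} (π : ℝ) (f : (Fin n → Bool) → ℝ) (a : ℝ) :
    Exp n π (fun w => a * f w) = a * Exp n π f := by
  have := Exp_linear π f f a 0
  simpa using this

/-- Sharpness example: with `y_i(w) = ∑_j (w_j - π)` and `f_i = 2 y_i`,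
`τ_MPE(y) = n`, `τ_MPE(f) = 2n`, `∑_i E[(f_i - y_i)²] = n² π(1-π)`, and
`|τ_MPE(f) - τ_MPE(y)|² = n² = (π(1-π))⁻¹ ∑_i E[(f_i - y_i)²]`, so the Lipschitz
constant `(π(1-π))^{-1/2}` cannot be improved in its dependence on `n`. -/
theorem stmt9 (n : ℕ) (hn : 1 ≤ n) (π : ℝ) (hπ : 0 < π) (hπ' : π < 1) :
    let y : Fin n → (Fin n → Bool) → ℝ := fun _ w => ∑ j, (ind (w j) - π)
    let f : Fin n → (Fin n → Bool) → ℝ := fun i w => 2 * y i w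
    tauMPE n π y = n ∧
    tauMPE n π f = 2 * n ∧
    (∑ i, Exp n π (fun w => (f i w - y i w) ^ 2)) = (n : ℝ) ^ 2 * (π * (1 - π)) ∧
    |tauMPE n π f - tauMPE n π y| ^ 2 = (n : ℝ) ^ 2 ∧
    (n : ℝ) ^ 2 = (π * (1 - π))⁻¹ * ∑ i, Exp n π (fun w => (f i w - y i w) ^ 2) := by
  intro y f
  have hn0 : (n : ℝ) ≠ 0 := Nat.cast_ne_zero.mpr (by omega)
  have hπ0 : π ≠ 0 := ne_of_gt hπ
  have hπ1 : (1 : ℝ) - π ≠ 0 := by linarith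
  have hyS : ∀ i w, y i w = SS n π w := fun i w => rfl
  have hy : tauMPE n π y = n := by
    have e : (fun w => (∑ j, y j w) * (∑ i, (ind (w i) - π)))
        = fun w => (n : ℝ) * (SS n π w)^2 := by
      funext w
      show (∑ _j : Fin n, SS n π w) * (SS n π w) = (n : ℝ) * (SS n π w)^2
      rw [Finset.sum_const, Finset.card_univ, Fintype.card_fin, nsmul_eq_mul]; ring
    rw [tauMPE, e, Exp_const_mul, Exp_S2]
    field_simp
  have hf : tauMPE n π f = 2 * n := by
    have e : (fun w => (∑ j, f j w) * (∑ i, (ind (w i) - π)))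
        = fun w => (2 * n : ℝ) * (SS n π w)^2 := by
      funext w
      show (∑ _j : Fin n, 2 * SS n π w) * (SS n π w) = (2 * n : ℝ) * (SS n π w)^2
      rw [Finset.sum_const, Finset.card_univ, Fintype.card_fin, nsmul_eq_mul]; ring
    rw [tauMPE, e, Exp_const_mul, Exp_S2]
    field_simp
  have hsum : (∑ i, Exp n π (fun w => (f i w - y i w) ^ 2)) = (n : ℝ) ^ 2 * (π * (1 - π)) := by
    have e : ∀ i : Fin n, (fun w => (f i w - y i w) ^ 2) = fun w => (SS n π w)^2 := by
      intro i; funext w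
      show (2 * SS n π w - SS n π w)^2 = (SS n π w)^2
      ring
    calc (∑ i, Exp n π (fun w => (f i w - y i w) ^ 2))
        = ∑ _i : Fin n, (n : ℝ) * π * (1 - π) :=
          Finset.sum_congr rfl fun i _ => by rw [e i, Exp_S2]
      _ = (n : ℝ) ^ 2 * (π * (1 - π)) := by
          rw [Finset.sum_const, Finset.card_univ, Fintype.card_fin, nsmul_eq_mul]; ring
  refine ⟨hy, hf, hsum, ?_, ?_⟩
  · rw [hy, hf]
    rw [abs_of_nonneg (by have := Nat.cast_nonneg (α := ℝ) n; linarith : (0:ℝ) ≤ 2 * n - n)]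
    ring
  · rw [hsum]
    field_simp
end
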